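/- arXiv:1812.09963 — 6 statements merged into one kernel-verified Lean document; each statement's English description precedes it below -/
import Mathlib

section
/- In the algebra Dist((G_m)_1) over a field K of characteristic p (spanned by the elements binom(x, k) for 0 ≤ k < p, with multiplication binom(x,a)·binom(x,b) = ∑_{i=0}^{min(a,b)} C(a+b-i, a-i)·C(b, b-i)·binom(x, a+b-i), where binom(x,k) = 0 for k ≥ p), the elements X_a = ∑_{k=a}^{p-1} (-1)^{k-a} C(k,a) binom(x,k) for 0 ≤ a < p satisfy: binom(x,a)·X_a = X_a, and binom(x,j)·X_a = 0 for all j > a. -/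
open Finset

/-- The distribution algebra `Dist((G_m)_1)`: elements are coefficient vectors with respect to
the basis `binom(x,k)`, `0 ≤ k < p`, with multiplication
`binom(x,a)·binom(x,b) = ∑_{i=0}^{min(a,b)} C(a+b-i,a-i) C(b,b-i) binom(x,a+b-i)`,
terms `binom(x,m)` with `m ≥ p` omitted. -/
noncomputable def dmul (p : ℕ) {K : Type*} [Field K] (f g : Fin p → K) : Fin p → K :=
  fun m => ∑ a : Fin p, ∑ b : Fin p, ∑ i ∈ Finset.range (min a.1 b.1 + 1),
    if a.1 + b.1 - i = m.1 then
      (Nat.choose (a.1 + b.1 - i) (a.1 - i) : K) * (Nat.choose b.1 (b.1 - i) : K) * f a * g b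
    else 0

/-- The basis element `binom(x,k)`. -/
def bas (p : ℕ) {K : Type*} [Field K] (k : Fin p) : Fin p → K :=
  fun m => if m = k then 1 else 0

/-- The element `X_a = ∑_{k=a}^{p-1} (-1)^{k-a} C(k,a) binom(x,k)`. -/
def Xel (p : ℕ) {K : Type*} [Field K] (a : Fin p) : Fin p → K :=
  fun k => if a ≤ k then (-1 : K) ^ (k.1 - a.1) * (Nat.choose k.1 a.1 : K) else 0

/-!
For `t < p`, evaluating `∑ f k • binom(x,k)` at `x = t` is multiplicative: this is the identity
`C(t,a) C(t,b) = ∑ᵢ C(a+b-i,a-i) C(b,b-i) C(t,a+b-i)` together with `C(t,m) = 0` for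
`m ≥ p > t`, which makes the truncation harmless. These `p` evaluations are jointly injective,
since the matrix `(C(t,k))` is unitriangular. They send `binom(x,j)` to `t ↦ C(t,j)` and, by
binomial inversion, `X_a` to the indicator of `a`; both claims thereby become identities between
functions on `{0, …, p-1}`.
-/

namespace Nat

theorem choose_mul_choose_mul_choose {t a b i : ℕ} (hia : i ≤ a) (hib : i ≤ b) :
    (a + b - i).choose (a - i) * b.choose (b - i) * t.choose (a + b - i) =
      t.choose a * (a.choose i * (t - a).choose (b - i)) := by
  have h₁ := choose_mul (n := t) (k := a + b - i) (s := a) (by omega)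
  have h₂ := choose_mul (n := a + b - i) (k := a) (s := a - i) (by omega)
  rw [show a + b - i - a = b - i by omega] at h₁
  rw [show a + b - i - (a - i) = b by omega, show a - (a - i) = i by omega,
    choose_symm hia] at h₂
  rw [choose_symm hib, ← h₂]
  calc _ = a.choose i * (t.choose (a + b - i) * (a + b - i).choose a) := by ring
    _ = _ := by rw [h₁]; ring

theorem sum_choose_mul_choose_mul_choose (t a b : ℕ) :
    ∑ i ∈ range (min a b + 1),
        (a + b - i).choose (a - i) * b.choose (b - i) * t.choose (a + b - i) =
      t.choose a * t.choose b := by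
  obtain hta | hat := lt_or_ge t a
  · rw [choose_eq_zero_of_lt hta, zero_mul]
    refine sum_eq_zero fun i hi => ?_
    rw [choose_eq_zero_of_lt (n := t) (k := a + b - i) (by grind), mul_zero]
  · obtain ⟨n, rfl⟩ := exists_add_of_le hat
    have vandermonde :
        (a + n).choose b = ∑ i ∈ range (b + 1), a.choose i * n.choose (b - i) := by
      rw [add_choose_eq, Finset.Nat.sum_antidiagonal_eq_sum_range_succ_mk]
    rw [vandermonde, mul_sum]
    refine sum_subset_zero_on_sdiff (range_subset_range.mpr (by omega)) (fun i hi => ?_)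
      fun i hi => ?_
    · simp only [mem_sdiff, mem_range] at hi
      simp [choose_eq_zero_of_lt (show a < i by omega)]
    · simp only [mem_range] at hi
      rw [choose_mul_choose_mul_choose (by omega) (by omega), Nat.add_sub_cancel_left]

theorem _root_.Int.alternating_sum_range_choose_mul_choose (t a : ℕ) :
    ∑ k ∈ range (t + 1), ((-1) ^ (k - a) * (t.choose k * k.choose a) : ℤ) =
      if t = a then 1 else 0 := by
  obtain hta | hat := lt_or_ge t a
  · rw [if_neg hta.ne]
    refine sum_eq_zero fun k hk => ?_
    rw [choose_eq_zero_of_lt (n := k) (k := a) (by grind)]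
    simp
  · obtain ⟨n, rfl⟩ := exists_add_of_le hat
    have hshift (j : ℕ) : (a + n).choose (a + j) * (a + j).choose a =
        (a + n).choose a * n.choose j := by
      rw [choose_mul (by omega), Nat.add_sub_cancel_left, Nat.add_sub_cancel_left]
    rw [add_assoc, sum_range_add, sum_eq_zero fun k hk => by
      rw [choose_eq_zero_of_lt (n := k) (k := a) (mem_range.mp hk)]; simp]
    simp_rw [zero_add, Nat.add_sub_cancel_left, ← Nat.cast_mul, hshift, Nat.cast_mul,
      mul_left_comm _ ((a + n).choose a : ℤ), ← mul_sum, Int.alternating_sum_range_choose]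
    obtain rfl | hn := eq_or_ne n 0 <;> simp [*]

end Nat

open Matrix

section
variable {p : ℕ} {K : Type*} [Field K]

def binomialMatrix (p : ℕ) (K : Type*) [Field K] : Matrix (Fin p) (Fin p) K :=
  of fun t k => ((t : ℕ).choose k : K)

theorem binomialMatrix_mulVec_apply (f : Fin p → K) (t : Fin p) :
    (binomialMatrix p K *ᵥ f) t = ∑ k : Fin p, ((t : ℕ).choose k : K) * f k :=
  rfl

theorem binomialMatrix_mulVec_injective : Function.Injective (binomialMatrix p K).mulVec := by
  refine mulVec_injective_iff_isUnit.mpr <| (isUnit_iff_isUnit_det _).mpr ?_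
  have lower : (binomialMatrix p K).IsLowerTriangular := fun t k (hkt : k > t) => by
    simp [binomialMatrix, Nat.choose_eq_zero_of_lt (Fin.lt_def.mp hkt)]
  rw [det_of_isLowerTriangular _ lower]
  simp [binomialMatrix]

theorem binomialMatrix_mulVec_bas (j : Fin p) :
    binomialMatrix p K *ᵥ bas p j = fun t : Fin p => ((t : ℕ).choose j : K) := by
  ext t
  simp [binomialMatrix_mulVec_apply, bas]

theorem Xel_apply (a k : Fin p) :
    Xel p (K := K) a k = (-1) ^ ((k : ℕ) - a) * ((k : ℕ).choose a : K) := by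
  unfold Xel
  split_ifs with h
  · rfl
  · simp [Nat.choose_eq_zero_of_lt (not_le.mp h)]

theorem binomialMatrix_mulVec_Xel (a : Fin p) : binomialMatrix p K *ᵥ Xel p a = bas p a := by
  ext t
  have key := congrArg (Int.cast : ℤ → K) (Int.alternating_sum_range_choose_mul_choose t a)
  push_cast at key
  calc (binomialMatrix p K *ᵥ Xel p a) t
      = ∑ k ∈ range p, ((t : ℕ).choose k : K) * ((-1) ^ (k - a) * (k.choose a : K)) := by
        simp_rw [binomialMatrix_mulVec_apply, Xel_apply]
        exact Fin.sum_univ_eq_sum_range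
          (fun k => ((t : ℕ).choose k : K) * ((-1) ^ (k - a) * (k.choose a : K))) p
    _ = ∑ k ∈ range (t + 1),
          ((t : ℕ).choose k : K) * ((-1) ^ (k - a) * (k.choose a : K)) := by
        refine (sum_subset (range_subset_range.mpr t.2) fun k _ hk => ?_).symm
        rw [Nat.choose_eq_zero_of_lt (n := t) (k := k) (by simpa using hk)]
        simp
    _ = bas p a t := by
        simp_rw [mul_left_comm _ ((-1 : K) ^ _), key, bas, Fin.val_inj]

theorem sum_choose_mul_ite_eq (t : Fin p) (n : ℕ) (c : K) :
    ∑ m : Fin p, ((t : ℕ).choose m : K) * (if n = m then c else 0) =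
      (t : ℕ).choose n * c := by
  obtain hnp | hpn := lt_or_ge n p
  · rw [Fintype.sum_eq_single ⟨n, hnp⟩ fun m hm => by
      rw [if_neg fun h => hm (Fin.ext h.symm), mul_zero]]
    simp
  · have hm (m : Fin p) : n ≠ m := by omega
    simp [hm, Nat.choose_eq_zero_of_lt (show (t : ℕ) < n by omega)]

theorem binomialMatrix_mulVec_dmul (f g : Fin p → K) :
    binomialMatrix p K *ᵥ dmul p f g =
      (binomialMatrix p K *ᵥ f) * (binomialMatrix p K *ᵥ g) := by
  ext t
  rw [Pi.mul_apply, binomialMatrix_mulVec_apply, binomialMatrix_mulVec_apply,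
    binomialMatrix_mulVec_apply, sum_mul_sum]
  simp only [dmul, mul_sum]
  rw [sum_comm]
  refine sum_congr rfl fun a _ => ?_
  rw [sum_comm]
  refine sum_congr rfl fun b _ => ?_
  have key := congrArg (Nat.cast : ℕ → K) (Nat.sum_choose_mul_choose_mul_choose t a b)
  push_cast at key
  rw [sum_comm]
  simp_rw [sum_choose_mul_ite_eq]
  calc _ = (∑ i ∈ range (min a.1 b.1 + 1), ((a + b - i : ℕ).choose (a - i) : K) *
        (b.1.choose (b - i) : K) * ((t : ℕ).choose (a + b - i) : K)) * (f a * g b) := by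
        rw [sum_mul]
        exact sum_congr rfl fun i _ => by ring
    _ = _ := by rw [key]; ring

end

theorem stmt_5_general {p : ℕ} {K : Type*} [Field K] (a : Fin p) :
    dmul p (bas p (K := K) a) (Xel p a) = Xel p a ∧
      ∀ j : Fin p, a < j → dmul p (bas p (K := K) j) (Xel p a) = 0 := by
  constructor
  · apply binomialMatrix_mulVec_injective
    rw [binomialMatrix_mulVec_dmul, binomialMatrix_mulVec_bas, binomialMatrix_mulVec_Xel]
    ext t
    by_cases hta : t = a <;> simp [bas, hta]
  · intro j hj
    apply binomialMatrix_mulVec_injective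
    rw [binomialMatrix_mulVec_dmul, binomialMatrix_mulVec_bas, binomialMatrix_mulVec_Xel,
      mulVec_zero]
    ext t
    by_cases hta : t = a <;> simp [bas, hta, Nat.choose_eq_zero_of_lt hj]

theorem stmt_5 {p : ℕ} (hp : p.Prime) {K : Type*} [Field K] [CharP K p] (a : Fin p) :
    dmul p (bas p (K := K) a) (Xel p a) = Xel p a ∧
      ∀ j : Fin p, a < j → dmul p (bas p (K := K) j) (Xel p a) = 0 :=
  stmt_5_general a
end

section
/- In Dist((G_m)_1) with char K = p, for 0 < a < p the idempotent X_a = ∑_{k=a}^{p-1} (-1)^{k-a} C(k,a) binom(x,k) satisfies x · X_a = a · X_a, where x = binom(x,1); and for a = 0, x · X_0 = 0. -/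
open Finset

lemma step1 {p : ℕ} (hp : p.Prime) {K : Type*} [Field K] (g : Fin p → K) (m : Fin p) :
    dmul p (bas p (K := K) ⟨1, hp.one_lt⟩) g m
      = (m.1 : K) * g m + ∑ b : Fin p, if b.1 + 1 = m.1 then (m.1 : K) * g b else 0 := by
  unfold dmul
  rw [Finset.sum_eq_single (⟨1, hp.one_lt⟩ : Fin p)]
  · have key : ∀ b : Fin p,
        (∑ i ∈ Finset.range (min (1 : ℕ) b.1 + 1),
          if 1 + b.1 - i = m.1 then
            (Nat.choose (1 + b.1 - i) (1 - i) : K) * (Nat.choose b.1 (b.1 - i) : K) *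
              (bas p (K := K) ⟨1, hp.one_lt⟩ ⟨1, hp.one_lt⟩) * g b
          else 0)
        = (if b.1 = m.1 then (m.1 : K) * g b else 0)
          + (if b.1 + 1 = m.1 then (m.1 : K) * g b else 0) := by
      intro b
      have hb1 : bas p (K := K) ⟨1, hp.one_lt⟩ ⟨1, hp.one_lt⟩ = 1 := by simp [bas]
      rw [hb1]
      rcases Nat.eq_zero_or_pos b.1 with hb | hb
      · rw [hb, show min (1:ℕ) 0 = 0 from rfl, Finset.sum_range_one]
        split_ifs with h1 h2 h3 h4 h5 h6 h7 <;> try omega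
        · have hm1 : m.1 = 1 := by omega
          rw [hm1]; norm_num
        · have hm0 : m.1 = 0 := by omega
          rw [hm0]; norm_num
        · norm_num
      · rw [show min (1:ℕ) b.1 = 1 by omega, Finset.sum_range_succ, Finset.sum_range_one]
        have hc : Nat.choose b.1 (b.1 - 1) = b.1 := by
          rw [← Nat.choose_symm (by omega : b.1 - 1 ≤ b.1),
            show b.1 - (b.1 - 1) = 1 by omega, Nat.choose_one_right]
        simp only [show 1 + b.1 - 0 = b.1 + 1 by omega, show 1 + b.1 - 1 = b.1 by omega,
          show (1:ℕ) - 0 = 1 from rfl, show (1:ℕ) - 1 = 0 from rfl,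
          show b.1 - 0 = b.1 from rfl, Nat.choose_one_right, Nat.choose_self,
          Nat.choose_zero_right, hc]
        split_ifs with h1 h2 h3 h4 h5 h6 h7 <;> try omega
        · have hm : m.1 = b.1 + 1 := by omega
          rw [hm]; push_cast; ring
        · have hm : m.1 = b.1 := by omega
          rw [hm]; push_cast; ring
        · ring
    calc (∑ b : Fin p, ∑ i ∈ Finset.range (min (1:ℕ) b.1 + 1),
          if 1 + b.1 - i = m.1 then
            (Nat.choose (1 + b.1 - i) (1 - i) : K) * (Nat.choose b.1 (b.1 - i) : K) *
              (bas p (K := K) ⟨1, hp.one_lt⟩ ⟨1, hp.one_lt⟩) * g b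
          else 0)
        = ∑ b : Fin p, ((if b.1 = m.1 then (m.1 : K) * g b else 0)
            + (if b.1 + 1 = m.1 then (m.1 : K) * g b else 0)) := by
          exact Finset.sum_congr rfl fun b _ => key b
      _ = _ := by
          rw [Finset.sum_add_distrib]
          congr 1
          rw [Finset.sum_eq_single m]
          · simp
          · intro b _ hb
            exact if_neg fun h => hb (Fin.ext h)
          · intro h; exact absurd (Finset.mem_univ _) h
  · intro b _ hb
    apply Finset.sum_eq_zero; intro c _
    apply Finset.sum_eq_zero; intro i _
    simp [bas, hb]
  · intro h; exact absurd (Finset.mem_univ _) h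

theorem stmt_9 {p : ℕ} (hp : p.Prime) {K : Type*} [Field K] [CharP K p] (a : Fin p) :
    dmul p (bas p (K := K) ⟨1, hp.one_lt⟩) (Xel p a) = (a.1 : K) • Xel p a := by
  funext m
  rw [step1 hp, Pi.smul_apply, smul_eq_mul]
  rcases Nat.eq_zero_or_pos m.1 with hm | hm
  · rw [Finset.sum_eq_zero (fun b _ => if_neg (by omega))]
    rw [hm]
    by_cases ha : a.1 = 0
    · rw [ha]; norm_num
    · have hX : Xel p a m = (0 : K) := by
        unfold Xel
        rw [if_neg (by rw [Fin.le_def]; omega)]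
      rw [hX]; ring
  · rw [Finset.sum_eq_single (⟨m.1 - 1, by omega⟩ : Fin p)]
    rotate_left
    · intro b _ hb
      refine if_neg fun h => hb (Fin.ext ?_)
      show b.1 = m.1 - 1
      omega
    · intro h; exact absurd (Finset.mem_univ _) h
    rw [if_pos (show m.1 - 1 + 1 = m.1 by omega)]
    unfold Xel
    simp only [Fin.le_def]
    show (m.1 : K) * (if a.1 ≤ m.1 then _ else 0)
        + (m.1 : K) * (if a.1 ≤ m.1 - 1 then (-1:K) ^ (m.1 - 1 - a.1)
            * (Nat.choose (m.1 - 1) a.1 : K) else 0)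
      = (a.1 : K) * (if a.1 ≤ m.1 then _ else 0)
    rcases lt_trichotomy a.1 m.1 with h | h | h
    · rw [if_pos (by omega), if_pos (by omega)]
      have hnat : m.1 * Nat.choose (m.1 - 1) a.1 = (m.1 - a.1) * Nat.choose m.1 a.1 := by
        have h1 := Nat.add_one_mul_choose_eq (m.1 - 1) a.1
        simp only [Nat.succ_eq_add_one, show m.1 - 1 + 1 = m.1 by omega] at h1
        rw [h1, Nat.choose_succ_right_eq, mul_comm]
      have hK : (m.1 : K) * (Nat.choose (m.1 - 1) a.1 : K)
          = ((m.1 : K) - (a.1 : K)) * (Nat.choose m.1 a.1 : K) := by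
        have := congrArg (Nat.cast (R := K)) hnat
        push_cast [Nat.cast_sub (le_of_lt h)] at this
        exact this
      have hpow : (-1 : K) ^ (m.1 - a.1) = (-1 : K) ^ (m.1 - 1 - a.1) * (-1) := by
        rw [show m.1 - a.1 = (m.1 - 1 - a.1) + 1 by omega, pow_succ]
      rw [hpow]
      linear_combination ((-1:K) ^ (m.1 - 1 - a.1)) * hK
    · rw [if_pos (by omega), if_neg (by omega), h, Nat.sub_self]
      simp
    · rw [if_neg (by omega), if_neg (by omega)]
      ring
end

section
/- Let p be a prime, m, n ≥ 1. The number of pairs of weakly increasing tuples 0 ≤ a₁ ≤ ⋯ ≤ a_m < p and 0 ≤ b₁ ≤ ⋯ ≤ b_n < p such that a_i + b_j is not divisible by p for all i, j, equals ∑_{l=1}^{min(n, p-1)} C(p, l) · C(n-1, n-l) · C(m + p - l - 1, m). -/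
/-!
A weakly increasing tuple is the same thing as the multiset of its entries, and in `Fin p` the
condition `p ∣ a + b` says `a = -b`. Group the pairs of multisets `(A, B)` by the support `S` of
`B`. Removing one copy of each element of `S` shows that there are `C(n - 1, n - |S|)` multisets of
size `n` with support exactly `S`, and `A` ranges over the `C(p - |S| + m - 1, m)` multisets of
size `m` avoiding `-S`. Summing over `|S| = l` gives the formula; the terms `l = 0` and `l = p`
vanish because `m, n ≥ 1`.
-/

open Finset
open scoped Classical

namespace Sym

variable {α : Type*} {k : ℕ}

def ofFn (f : Fin k → α) : Sym α k := ⟨(List.ofFn f : Multiset α), by simp⟩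

@[simp]
lemma mem_ofFn {f : Fin k → α} {a : α} : a ∈ ofFn f ↔ ∃ i, f i = a := by
  simp [ofFn, Sym.mem_mk, List.mem_ofFn]

section LinearOrder

variable [LinearOrder α]

noncomputable def sortFn (s : Sym α k) : Fin k → α := fun i =>
  (Multiset.sort s.1 (· ≤ ·))[i.1]'(by simp)

lemma monotone_sortFn (s : Sym α k) : Monotone s.sortFn := fun _ _ hij =>
  (Multiset.pairwise_sort s.1 (· ≤ ·)).rel_get_of_le hij

lemma ofFn_sortFn (s : Sym α k) : ofFn s.sortFn = s := by
  have : List.ofFn s.sortFn = Multiset.sort s.1 (· ≤ ·) :=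
    List.ext_get (by simp) (by simp [sortFn])
  exact Subtype.ext (by simp only [ofFn, this, Multiset.sort_eq])

lemma sortFn_ofFn {f : Fin k → α} (hf : Monotone f) : (ofFn f).sortFn = f := by
  have hperm : (Multiset.sort (ofFn f).1 (· ≤ ·)).Perm (List.ofFn f) := by
    rw [← Multiset.coe_eq_coe, Multiset.sort_eq]; rfl
  have heq := hperm.eq_of_pairwise' (Multiset.pairwise_sort _ _) hf.sortedLE_ofFn.pairwise
  funext i
  simp only [sortFn, List.getElem_of_eq heq, List.getElem_ofFn]

end LinearOrder

end Sym

theorem card_monotone_pairs_eq_card_sym_pairs {α : Type*} [LinearOrder α] [Fintype α]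
    {k k' : ℕ} (R : Sym α k → Sym α k' → Prop) :
    #{fg : (Fin k → α) × (Fin k' → α) |
        Monotone fg.1 ∧ Monotone fg.2 ∧ R (Sym.ofFn fg.1) (Sym.ofFn fg.2)} =
      #{AB : Sym α k × Sym α k' | R AB.1 AB.2} := by
  refine card_nbij' (fun fg => (Sym.ofFn fg.1, Sym.ofFn fg.2))
    (fun AB => (AB.1.sortFn, AB.2.sortFn)) ?_ ?_ ?_ ?_
  · intro fg hfg
    simp only [mem_coe, mem_filter, mem_univ, true_and] at hfg ⊢
    exact hfg.2.2
  · intro AB hAB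
    simp only [mem_coe, mem_filter, mem_univ, true_and, Sym.ofFn_sortFn] at hAB ⊢
    exact ⟨Sym.monotone_sortFn _, Sym.monotone_sortFn _, hAB⟩
  · intro fg hfg
    simp only [mem_coe, mem_filter, mem_univ, true_and] at hfg
    simp [Sym.sortFn_ofFn hfg.1, Sym.sortFn_ofFn hfg.2.1]
  · intro AB _
    simp [Sym.ofFn_sortFn]

namespace Finset

variable {α : Type*} [DecidableEq α]

lemma card_sym (s : Finset α) (n : ℕ) : #(s.sym n) = (#s + n - 1).choose n := by
  calc #(s.sym n) = #((s.attach.map (.subtype (· ∈ s))).sym n) := by rw [attach_map_val]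
    _ = Fintype.card (Sym s n) := by rw [sym_map, card_map, attach_eq_univ, sym_univ, card_univ]
    _ = (#s + n - 1).choose n := by rw [Sym.card_sym_eq_choose, Fintype.card_coe]

variable [Fintype α]

lemma card_filter_sym_toFinset_eq (S : Finset α) (n : ℕ) :
    #{B : Sym α n | (B : Multiset α).toFinset = S} =
      if #S ≤ n then (n - 1).choose (n - #S) else 0 := by
  split_ifs with hS
  · rw [← (by omega : #S + (n - #S) - 1 = n - 1), ← card_sym]
    refine (card_bij (fun (C : Sym α (n - #S)) _ => Sym.mk (S.val + (C : Multiset α))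
      (by rw [Multiset.card_add, card_val, Sym.card_coe]; omega)) ?_ ?_ ?_).symm
    · intro C hC
      rw [mem_filter]
      simp only [mem_univ, true_and, Sym.coe_mk, Multiset.toFinset_add, val_toFinset,
        union_eq_left]
      exact fun x hx => mem_sym_iff.1 hC x (Multiset.mem_toFinset.1 hx)
    · exact fun C _ C' _ h => Sym.coe_injective (add_left_cancel (congrArg Subtype.val h))
    · intro B hB
      have hmem (x : α) : x ∈ B ↔ x ∈ S := by
        rw [← (mem_filter.1 hB).2, Multiset.mem_toFinset, Sym.mem_coe]
      have hle : S.val ≤ (B : Multiset α) :=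
        (Multiset.le_iff_subset S.nodup).2 fun x hx => (hmem x).2 hx
      refine ⟨Sym.mk ((B : Multiset α) - S.val)
        (by rw [Multiset.card_sub hle, Sym.card_coe, card_val]), ?_,
        Sym.coe_injective (add_tsub_cancel_of_le hle)⟩
      exact mem_sym_iff.2 fun x hx => (hmem x).1 (Multiset.mem_of_le (Multiset.sub_le_self _ _) hx)
  · rw [card_eq_zero, filter_eq_empty_iff]
    rintro B - rfl
    exact hS ((Multiset.toFinset_card_le _).trans B.2.le)

end Finset

theorem card_sym_pairs_avoiding {α : Type*} [DecidableEq α] [Fintype α] {σ : α → α}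
    (hσ : σ.Injective) (m n : ℕ) :
    #{AB : Sym α m × Sym α n | ∀ x ∈ AB.1, ∀ y ∈ AB.2, x ≠ σ y} =
      ∑ l ∈ range (Fintype.card α + 1), (Fintype.card α).choose l *
        ((Fintype.card α - l + m - 1).choose m *
          if l ≤ n then (n - 1).choose (n - l) else 0) := by
  rw [card_eq_sum_card_fiberwise (f := fun AB => (AB.2 : Multiset α).toFinset)
    (t := univ.powerset) fun _ _ => mem_powerset.2 (subset_univ _)]
  have fibre (S : Finset α) :
      ({AB ∈ {AB : Sym α m × Sym α n | ∀ x ∈ AB.1, ∀ y ∈ AB.2, x ≠ σ y} |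
          (AB.2 : Multiset α).toFinset = S} : Finset _) =
        (univ \ S.image σ).sym m ×ˢ
          ({B : Sym α n | (B : Multiset α).toFinset = S} : Finset _) := by
    ext ⟨A, B⟩
    simp only [mem_filter, mem_univ, true_and, mem_product, mem_sym_iff, mem_sdiff, mem_image]
    constructor
    · rintro ⟨hAB, rfl⟩
      refine ⟨fun x hx => ?_, rfl⟩
      rintro ⟨y, hy, rfl⟩
      exact hAB _ hx y (Multiset.mem_toFinset.1 hy) rfl
    · rintro ⟨hA, rfl⟩
      exact ⟨fun x hx y hy hxy => hA x hx ⟨y, Multiset.mem_toFinset.2 hy, hxy.symm⟩, rfl⟩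
  simp_rw [fibre, card_product, card_sym, card_filter_sym_toFinset_eq, card_univ_sdiff,
    card_image_of_injective _ hσ]
  rw [sum_powerset_apply_card (fun l => (Fintype.card α - l + m - 1).choose m *
    if l ≤ n then (n - 1).choose (n - l) else 0), card_univ]
  rfl

lemma Fin.dvd_val_add_val_iff {p : ℕ} (x y : Fin p) : p ∣ (x : ℕ) + y ↔ x = -y := by
  obtain _ | p := p
  · exact x.elim0
  rw [Nat.dvd_iff_mod_eq_zero, ← Fin.val_add, ← Fin.val_zero (p + 1), ← Fin.ext_iff,
    add_eq_zero_iff_eq_neg]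

lemma sum_range_choose_eq_sum_Icc {p m n : ℕ} (hm : 1 ≤ m) (hn : 1 ≤ n) :
    ∑ l ∈ range (p + 1), p.choose l *
        ((p - l + m - 1).choose m * if l ≤ n then (n - 1).choose (n - l) else 0) =
      ∑ l ∈ Icc 1 (min n (p - 1)),
        p.choose l * (n - 1).choose (n - l) * (m + p - l - 1).choose m := by
  rw [← sum_subset (s₁ := Icc 1 (min n (p - 1)))
    (fun l hl => by simp only [mem_Icc, mem_range] at hl ⊢; omega)]
  · refine sum_congr rfl fun l hl => ?_
    rw [mem_Icc] at hl
    rw [if_pos (by omega), (by omega : p - l + m - 1 = m + p - l - 1)]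
    ring
  · intro l hl hl'
    simp only [mem_Icc, mem_range] at hl hl'
    split_ifs with hln
    · obtain rfl | rfl : l = 0 ∨ p = l := by omega
      · simp [Nat.choose_eq_zero_of_lt (by omega : n - 1 < n)]
      · simp [Nat.choose_eq_zero_of_lt (by omega : m - 1 < m)]
    · simp

theorem stmt_13_general (p m n : ℕ) (hm : 1 ≤ m) (hn : 1 ≤ n) :
    (Finset.univ.filter (fun ab : (Fin m → Fin p) × (Fin n → Fin p) =>
        (∀ i j : Fin m, i ≤ j → ab.1 i ≤ ab.1 j) ∧
        (∀ i j : Fin n, i ≤ j → ab.2 i ≤ ab.2 j) ∧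
        ∀ (i : Fin m) (j : Fin n), ¬ p ∣ ((ab.1 i : ℕ) + (ab.2 j : ℕ)))).card =
      ∑ l ∈ Finset.Icc 1 (min n (p - 1)),
        Nat.choose p l * Nat.choose (n - 1) (n - l) * Nat.choose (m + p - l - 1) m := by
  have avoid (a : Fin m → Fin p) (b : Fin n → Fin p) :
      (∀ i j, ¬ p ∣ ((a i : ℕ) + (b j : ℕ))) ↔
        ∀ x ∈ Sym.ofFn a, ∀ y ∈ Sym.ofFn b, x ≠ -y := by
    simp [Fin.dvd_val_add_val_iff]
  rw [filter_congr fun ab _ => show _ ↔ Monotone ab.1 ∧ Monotone ab.2 ∧ _ from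
      and_congr_right' (and_congr_right' (avoid ab.1 ab.2))]
  have count := (card_monotone_pairs_eq_card_sym_pairs (α := Fin p)
    fun A B => ∀ x ∈ A, ∀ y ∈ B, x ≠ -y).trans
    (by convert card_sym_pairs_avoiding (neg_injective (G := Fin p)) m n)
  rw [Fintype.card_fin, sum_range_choose_eq_sum_Icc hm hn] at count
  convert count using 3

theorem stmt_13 (p m n : ℕ) (hp : p.Prime) (hm : 1 ≤ m) (hn : 1 ≤ n) :
    (Finset.univ.filter (fun ab : (Fin m → Fin p) × (Fin n → Fin p) =>
        (∀ i j : Fin m, i ≤ j → ab.1 i ≤ ab.1 j) ∧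
        (∀ i j : Fin n, i ≤ j → ab.2 i ≤ ab.2 j) ∧
        ∀ (i : Fin m) (j : Fin n), ¬ p ∣ ((ab.1 i : ℕ) + (ab.2 j : ℕ)))).card =
      ∑ l ∈ Finset.Icc 1 (min n (p - 1)),
        Nat.choose p l * Nat.choose (n - 1) (n - l) * Nat.choose (m + p - l - 1) m :=
  stmt_13_general p m n hm hn
end

section
/- Let p be a prime, q = p^r with r ≥ 1, and m, n ≥ 1. The number of pairs of weakly increasing tuples 0 ≤ a₁ ≤ ⋯ ≤ a_m < q and 0 ≤ b₁ ≤ ⋯ ≤ b_n < q such that p does not divide a_i + b_j for all i, j, equals ∑_{l=1}^{min(p-1,n)} C(p,l) · C(q - (q/p)·l + m - 1, m) · ∑_{n₁+⋯+n_l = n, n_j > 0} ∏_{j=1}^{l} C(q/p + n_j - 1, n_j). -/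
open Finset
open scoped Classical

/-!
Sorting identifies weakly increasing tuples with multisets, so we count pairs of multisets
`(A, B)` of sizes `m, n` over `Fin q` such that no residue of `A` is the negative of a residue of
`B`. Fix the set `T` of residues met by `B`, with `#T = l`. Every residue class has `q / p`
elements, so `A` is a multiset of size `m` over the `q - (q / p) l` elements whose residues avoid
`-T`, and `B` splits into nonempty multisets of sizes `n₁, …, n_l` over the `l` classes of `T`.
Summing over the `C(p, l)` sets `T` of each size gives the formula; the terms `l = 0` and `l > n`
vanish because `B` cannot meet exactly `l` classes, and `l = p` vanishes because `A` would have
nowhere to go.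
-/

namespace Sym

variable {α : Type*} [LinearOrder α] {n : ℕ}

def equivMonotone : {f : Fin n → α // Monotone f} ≃ Sym α n where
  toFun f := Sym.mk (List.ofFn f.1) (by simp)
  invFun s := ⟨fun i => (s.1.sort (· ≤ ·)).get (i.cast (by simp)),
    fun _ _ hij => (s.1.pairwise_sort _).rel_get_of_le hij⟩
  left_inv f := by
    have : (List.ofFn f.1).mergeSort (fun a b => decide (a ≤ b)) = List.ofFn f.1 :=
      List.mergeSort_eq_self _ (List.pairwise_ofFn.2 fun i j hij => by simpa using f.2 hij.le)
    ext i
    simp [this]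
    rfl
  right_inv s := Subtype.ext <|
    (congrArg ((↑) : List α → Multiset α)
      (List.ext_getElem (by simp) fun _ _ _ => by simp; rfl)).trans (Multiset.sort_eq s.1 (· ≤ ·))

theorem mem_equivMonotone {f : {f : Fin n → α // Monotone f}} {x : α} :
    x ∈ equivMonotone f ↔ ∃ i, f.1 i = x :=
  show x ∈ (List.ofFn f.1 : Multiset α) ↔ _ by simp

theorem equivMonotone_symm_apply_mem (s : Sym α n) (i : Fin n) :
    (equivMonotone.symm s).1 i ∈ s := by
  simpa using (mem_equivMonotone (f := equivMonotone.symm s)).2 ⟨i, rfl⟩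

end Sym

theorem card_monotone_pairs_eq_card_sym_pairs_s15 {α β : Type*} [LinearOrder α] [LinearOrder β]
    (R : α → β → Prop) (m n : ℕ) :
    Nat.card {ab : (Fin m → α) × (Fin n → β) //
        Monotone ab.1 ∧ Monotone ab.2 ∧ ∀ i j, R (ab.1 i) (ab.2 j)} =
      Nat.card {AB : Sym α m × Sym β n // ∀ x ∈ AB.1, ∀ y ∈ AB.2, R x y} :=
  Nat.card_congr
    { toFun ab := ⟨(Sym.equivMonotone ⟨ab.1.1, ab.2.1⟩, Sym.equivMonotone ⟨ab.1.2, ab.2.2.1⟩), by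
        rintro _ hx _ hy
        obtain ⟨i, rfl⟩ := Sym.mem_equivMonotone.1 hx
        obtain ⟨j, rfl⟩ := Sym.mem_equivMonotone.1 hy
        exact ab.2.2.2 i j⟩
      invFun AB := ⟨((Sym.equivMonotone.symm AB.1.1).1, (Sym.equivMonotone.symm AB.1.2).1),
        (Sym.equivMonotone.symm AB.1.1).2, (Sym.equivMonotone.symm AB.1.2).2, fun i j =>
          AB.2 _ (Sym.equivMonotone_symm_apply_mem _ i) _ (Sym.equivMonotone_symm_apply_mem _ j)⟩
      left_inv ab := by simp
      right_inv AB := by simp }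

theorem Finset.card_sym_s15 {α : Type*} [DecidableEq α] (s : Finset α) (k : ℕ) :
    #(s.sym k) = (#s + k - 1).choose k := by
  have : s.sym k = (univ : Finset (Sym s k)).map
      ⟨Sym.map Subtype.val, Sym.map_injective Subtype.val_injective _⟩ := by
    ext B
    simp only [mem_sym_iff, mem_map, mem_univ, true_and, Function.Embedding.coeFn_mk]
    refine ⟨fun h => ⟨B.attach.map fun x => ⟨x.1, h x.1 x.2⟩, ?_⟩, ?_⟩
    · rw [Sym.map_map]
      exact Sym.attach_map_coe B
    · rintro ⟨B, rfl⟩ a ha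
      obtain ⟨b, -, rfl⟩ := Sym.mem_map.1 ha
      exact b.2
  rw [this, card_map, card_univ, Sym.card_sym_eq_choose, Fintype.card_coe]

namespace Multiset

theorem card_filter_pos_iff {α : Type*} {s : Multiset α} {p : α → Prop} [DecidablePred p] :
    0 < card (s.filter p) ↔ ∃ x ∈ s, p x := by
  simp [card_pos_iff_exists_mem]

variable {α β ι : Type*} [DecidableEq α] [DecidableEq β] [Fintype ι] (f : α → β) {e : ι → β}

theorem sum_filter_eq_self_of_injective (he : Function.Injective e) {s : Multiset α}
    (hs : ∀ x ∈ s, f x ∈ Set.range e) : ∑ i, s.filter (fun x => f x = e i) = s := by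
  ext a
  simp_rw [count_sum', count_filter]
  by_cases ha : a ∈ s
  · obtain ⟨i, hi⟩ := hs a ha
    simp [← hi, he.eq_iff]
  · simp [count_eq_zero_of_notMem ha]

theorem filter_sum_eq_of_injective (he : Function.Injective e) (C : ι → Multiset α)
    (hC : ∀ i, ∀ x ∈ C i, f x = e i) (i : ι) :
    (∑ j, C j).filter (fun x => f x = e i) = C i := by
  ext a
  rw [count_filter, count_sum']
  split_ifs with ha
  · refine Finset.sum_eq_single i (fun j _ hji => count_eq_zero.2 fun hj => ?_) (by simp)
    exact hji (he ((hC j a hj).symm.trans ha))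
  · exact (count_eq_zero.2 fun hi => ha (hC i a hi)).symm

end Multiset

/-- The number of multisets of size `n` over `l` disjoint blocks of size `k` that meet every
block; `t j` is the number of elements falling in block `j`. -/
def coveringCount (k l n : ℕ) : ℕ :=
  ∑ t ∈ (Nat.antidiagonalTuple l n).filter (fun t => ∀ j, 0 < t j),
    ∏ j, (k + t j - 1).choose (t j)

theorem coveringCount_zero_left (k : ℕ) {n : ℕ} (hn : n ≠ 0) : coveringCount k 0 n = 0 := by
  obtain ⟨n, rfl⟩ := Nat.exists_eq_succ_of_ne_zero hn
  simp [coveringCount]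

theorem coveringCount_eq_zero_of_lt (k : ℕ) {l n : ℕ} (h : n < l) : coveringCount k l n = 0 := by
  refine sum_eq_zero fun t ht => absurd h (not_lt.2 ?_)
  simp only [mem_filter, Nat.mem_antidiagonalTuple] at ht
  calc l = ∑ _j : Fin l, 1 := by simp
    _ ≤ ∑ j, t j := sum_le_sum fun j _ => ht.2 j
    _ = n := ht.1

section Fibers

variable {α β : Type*} [Fintype α] [DecidableEq β] {f : α → β} {k : ℕ}

theorem card_filter_mem_of_card_fiber (hf : ∀ c, #{x | f x = c} = k) (S : Finset β) :
    #{x | f x ∈ S} = k * #S := by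
  rw [← sum_card_fiberwise_eq_card_filter, sum_const_nat fun c _ => hf c, mul_comm]

variable [DecidableEq α]

theorem card_sym_filter_card_filter_eq (f : α → β) {l n : ℕ} {e : Fin l → β}
    (he : Function.Injective e) (t : Fin l → ℕ) (ht : ∑ i, t i = n) :
    #{B : Sym α n | (∀ x ∈ B, f x ∈ Set.range e) ∧
        ∀ i, Multiset.card ((B : Multiset α).filter (f · = e i)) = t i} =
      ∏ i, #(({x | f x = e i} : Finset α).sym (t i)) := by
  rw [← Fintype.card_piFinset]
  refine card_bij'
    (fun B hB i => Sym.mk ((B : Multiset α).filter (f · = e i)) ((mem_filter.1 hB).2.2 i))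
    (fun C _ => Sym.mk (∑ i, (C i : Multiset α)) (by simp [ht])) ?_ ?_ ?_ ?_
  · intro B _
    simp only [Fintype.mem_piFinset, mem_sym_iff]
    intro i x hx
    simp only [Sym.mem_mk, Multiset.mem_filter] at hx
    simp [hx.2]
  · intro C hC
    simp only [Fintype.mem_piFinset, mem_sym_iff, mem_filter, mem_univ, true_and] at hC
    have hsum := Multiset.filter_sum_eq_of_injective f he (fun i => (C i : Multiset α)) hC
    simp only [mem_filter, mem_univ, true_and]
    refine ⟨fun x hx => ?_, fun i => by simp [hsum]⟩
    obtain ⟨i, -, hi⟩ := Multiset.mem_sum.1 ((Sym.mem_mk _ _ _).1 hx)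
    exact ⟨i, (hC i x hi).symm⟩
  · intro B hB
    exact Sym.ext (Multiset.sum_filter_eq_self_of_injective f he (mem_filter.1 hB).2.1)
  · intro C hC
    simp only [Fintype.mem_piFinset, mem_sym_iff, mem_filter, mem_univ, true_and] at hC
    funext i
    exact Sym.ext (Multiset.filter_sum_eq_of_injective f he (fun i => (C i : Multiset α)) hC i)

theorem card_sym_filter_image_eq (hf : ∀ c, #{x | f x = c} = k) (T : Finset β) (n : ℕ) :
    #{B : Sym α n | ((B : Multiset α).map f).toFinset = T} = coveringCount k #T n := by
  set e : Fin #T → β := fun j => T.equivFin.symm j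
  have he : Function.Injective e := Subtype.val_injective.comp T.equivFin.symm.injective
  have hT : ∀ c, c ∈ T ↔ c ∈ Set.range e := fun c =>
    ⟨fun hc => ⟨T.equivFin ⟨c, hc⟩, by simp [e]⟩, by rintro ⟨j, rfl⟩; exact (T.equivFin.symm j).2⟩
  set counts : Sym α n → Fin #T → ℕ :=
    fun B j => Multiset.card ((B : Multiset α).filter (f · = e j))
  rw [card_eq_sum_card_fiberwise (f := counts)
    (t := (Nat.antidiagonalTuple #T n).filter (fun t => ∀ j, 0 < t j))]
  · refine sum_congr rfl fun t ht => ?_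
    simp only [mem_filter, Nat.mem_antidiagonalTuple] at ht
    have hcongr : ∀ B : Sym α n, (((B : Multiset α).map f).toFinset = T ∧ counts B = t) ↔
        (∀ x ∈ B, f x ∈ Set.range e) ∧
          ∀ i, Multiset.card ((B : Multiset α).filter (f · = e i)) = t i := by
      intro B
      rw [funext_iff]
      refine and_congr_left fun hB => ⟨?_, fun h => ?_⟩
      · rintro rfl x hx
        exact (hT _).1 (by simpa using ⟨x, hx, rfl⟩)
      · ext c
        simp only [Multiset.mem_toFinset, Multiset.mem_map, hT]
        constructor
        · rintro ⟨x, hx, rfl⟩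
          exact h x hx
        · rintro ⟨j, rfl⟩
          exact Multiset.card_filter_pos_iff.1 (show 0 < counts B j from (hB j).symm ▸ ht.2 j)
    rw [filter_filter, filter_congr fun B _ => hcongr B, card_sym_filter_card_filter_eq f he t ht.1]
    simp only [card_sym_s15, hf]
  · intro B hB
    simp only [coe_filter, Set.mem_ofPred_eq, mem_univ, true_and, Nat.mem_antidiagonalTuple]
      at hB ⊢
    have hcover : ∀ x ∈ (B : Multiset α), f x ∈ Set.range e := fun x hx =>
      (hT _).1 (hB ▸ Multiset.mem_toFinset.2 (Multiset.mem_map_of_mem f hx))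
    refine ⟨?_, fun j => Multiset.card_filter_pos_iff.2 ?_⟩
    · simp only [counts, ← Multiset.card_sum, Multiset.sum_filter_eq_self_of_injective f he hcover,
        Sym.card_coe]
    · simpa [← hB] using (hT (e j)).2 ⟨j, rfl⟩

end Fibers

section Pairs

variable {α G : Type*} [Fintype α] [DecidableEq α] [AddGroup G] [Fintype G] [DecidableEq G]
  {f : α → G} {k : ℕ}

theorem card_filter_add_ne_zero_of_card_fiber (hf : ∀ c, #{x | f x = c} = k) (T : Finset G) :
    #{x | ∀ c ∈ T, f x + c ≠ 0} = Fintype.card α - k * #T := by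
  have : ∀ x, (∀ c ∈ T, f x + c ≠ 0) ↔ f x ∉ T.image Neg.neg := fun x => by
    simp [add_eq_zero_iff_eq_neg, eq_comm]
  rw [filter_congr fun x _ => this x, filter_not, card_univ_sdiff,
    card_filter_mem_of_card_fiber hf, card_image_of_injective _ neg_injective]

theorem card_sym_pairs_add_ne_zero (hf : ∀ c, #{x | f x = c} = k) (m n : ℕ) :
    Nat.card {AB : Sym α m × Sym α n // ∀ x ∈ AB.1, ∀ y ∈ AB.2, f x + f y ≠ 0} =
      ∑ l ∈ range (Fintype.card G + 1), (Fintype.card G).choose l *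
        (Fintype.card α - k * l + m - 1).choose m * coveringCount k l n := by
  have hsplit : ∀ T : Finset G,
      ({AB : Sym α m × Sym α n | ∀ x ∈ AB.1, ∀ y ∈ AB.2, f x + f y ≠ 0} : Finset _).filter
        (fun AB => ((AB.2 : Multiset α).map f).toFinset = T) =
      ({x | ∀ c ∈ T, f x + c ≠ 0} : Finset α).sym m ×ˢ
        ({B : Sym α n | ((B : Multiset α).map f).toFinset = T} : Finset _) := by
    intro T
    ext ⟨A, B⟩
    simp only [mem_filter, mem_univ, true_and, mem_product, mem_sym_iff]
    constructor
    · rintro ⟨h, rfl⟩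
      refine ⟨fun x hx c hc => ?_, rfl⟩
      obtain ⟨y, hy, rfl⟩ := Multiset.mem_map.1 (Multiset.mem_toFinset.1 hc)
      exact h x hx y hy
    · rintro ⟨h, rfl⟩
      exact ⟨fun x hx y hy => h x hx _ (Multiset.mem_toFinset.2 (Multiset.mem_map_of_mem f hy)),
        rfl⟩
  rw [Nat.card_eq_fintype_card, Fintype.card_subtype,
    card_eq_sum_card_fiberwise (f := fun AB => ((AB.2 : Multiset α).map f).toFinset)
      (t := univ) (by simp)]
  simp only [hsplit, card_product, card_sym_s15, card_filter_add_ne_zero_of_card_fiber hf,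
    card_sym_filter_image_eq hf]
  rw [← powerset_univ,
    sum_powerset_apply_card fun l => (Fintype.card α - k * l + m - 1).choose m * coveringCount k l n]
  simp [mul_assoc]

end Pairs

theorem card_fin_filter_natCast_eq {p N : ℕ} [NeZero p] (hN : p ∣ N) (c : ZMod p) :
    #{x : Fin N | ((x : ℕ) : ZMod p) = c} = N / p := by
  have hcount := Nat.count_modEq_card (b := N) (NeZero.pos p) c.val
  simp only [Nat.mod_eq_zero_of_dvd hN, Nat.not_lt_zero, if_false, add_zero,
    Nat.count_eq_card_filter_range, ← Nat.Iio_eq_range, ← Fin.map_valEmbedding_univ, filter_map,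
    card_map] at hcount
  rw [← hcount]
  conv_lhs => rw [← ZMod.natCast_zmod_val c]
  simp_rw [ZMod.natCast_eq_natCast_iff]
  rfl

theorem sum_range_choose_mul_coveringCount_eq_sum_Icc {p q k m n : ℕ} (hq : k * p = q)
    (hm : 0 < m) (hn : 0 < n) :
    ∑ l ∈ range (p + 1), p.choose l * (q - k * l + m - 1).choose m * coveringCount k l n =
      ∑ l ∈ Icc 1 (min (p - 1) n),
        p.choose l * (q - k * l + m - 1).choose m * coveringCount k l n := by
  refine (sum_subset (fun l hl => ?_) fun l hl hl' => ?_).symm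
  · simp only [mem_Icc, mem_range] at hl ⊢
    omega
  · simp only [mem_Icc, mem_range, not_and_or, not_le] at hl hl'
    obtain rfl | hl0 := Nat.eq_zero_or_pos l
    · rw [coveringCount_zero_left k hn.ne', mul_zero]
    obtain hnl | hln := lt_or_ge n l
    · rw [coveringCount_eq_zero_of_lt k hnl, mul_zero]
    obtain rfl : l = p := by omega
    rw [hq, Nat.sub_self, zero_add, Nat.choose_eq_zero_of_lt (Nat.sub_lt hm one_pos), mul_zero,
      zero_mul]

theorem stmt_15 (p r m n : ℕ) (hp : p.Prime) (hr : 1 ≤ r) (hm : 1 ≤ m) (hn : 1 ≤ n) :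
    (Finset.univ.filter (fun ab : (Fin m → Fin (p ^ r)) × (Fin n → Fin (p ^ r)) =>
        (∀ i j : Fin m, i ≤ j → ab.1 i ≤ ab.1 j) ∧
        (∀ i j : Fin n, i ≤ j → ab.2 i ≤ ab.2 j) ∧
        ∀ (i : Fin m) (j : Fin n), ¬ p ∣ ((ab.1 i : ℕ) + (ab.2 j : ℕ)))).card =
      ∑ l ∈ Finset.Icc 1 (min (p - 1) n),
        Nat.choose p l * Nat.choose (p ^ r - (p ^ r / p) * l + m - 1) m *
          ∑ t ∈ (Finset.Nat.antidiagonalTuple l n).filter (fun t => ∀ j, 0 < t j),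
            ∏ j, Nat.choose (p ^ r / p + t j - 1) (t j) := by
  have : NeZero p := ⟨hp.ne_zero⟩
  have hdvd : p ∣ p ^ r := dvd_pow_self p (by omega)
  rw [← Fintype.card_subtype, ← Nat.card_eq_fintype_card]
  calc _ = Nat.card {AB : Sym (Fin (p ^ r)) m × Sym (Fin (p ^ r)) n //
        ∀ x ∈ AB.1, ∀ y ∈ AB.2, ¬ p ∣ (x : ℕ) + y} :=
        card_monotone_pairs_eq_card_sym_pairs_s15 (fun x y : Fin (p ^ r) => ¬ p ∣ (x : ℕ) + y) m n
    _ = Nat.card {AB : Sym (Fin (p ^ r)) m × Sym (Fin (p ^ r)) n //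
        ∀ x ∈ AB.1, ∀ y ∈ AB.2, ((x : ℕ) : ZMod p) + ((y : ℕ) : ZMod p) ≠ 0} := by
        simp_rw [← Nat.cast_add, Ne, ZMod.natCast_eq_zero_iff]
    _ = ∑ l ∈ range (p + 1), p.choose l * (p ^ r - p ^ r / p * l + m - 1).choose m *
          coveringCount (p ^ r / p) l n := by
        rw [card_sym_pairs_add_ne_zero (card_fin_filter_natCast_eq hdvd), ZMod.card,
          Fintype.card_fin]
    _ = _ := sum_range_choose_mul_coveringCount_eq_sum_Icc (Nat.div_mul_cancel hdvd) hm hn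
end

section
/- In the commutative K-algebra Dist(T_1) for the torus of GL(1|1), which has basis binom(x,i)·binom(y,j) for 0 ≤ i,j < p over a field K of characteristic p, the element (x+y)·(X_a · Y_b) equals (a+b)·(X_a · Y_b), where X_a = ∑_{k=a}^{p-1} (-1)^{k-a} C(k,a) binom(x,k) and Y_b = ∑_{k=b}^{p-1} (-1)^{k-b} C(k,b) binom(y,k). -/
open Finset

private lemma key {p : ℕ} (hp : p.Prime) {K : Type*} [Field K] (a m : Fin p) :
    dmul p (bas p (K := K) ⟨1, hp.one_lt⟩) (Xel p a) m = (a.1 : K) * Xel p a m := by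
  unfold dmul
  rw [Fintype.sum_eq_single (⟨1, hp.one_lt⟩ : Fin p) (by intro x hx; simp [bas, hx])]
  have hb : ∀ b : Fin p,
      (∑ i ∈ Finset.range (min (⟨1, hp.one_lt⟩ : Fin p).1 b.1 + 1),
        if (⟨1, hp.one_lt⟩ : Fin p).1 + b.1 - i = m.1 then
          (Nat.choose ((⟨1, hp.one_lt⟩ : Fin p).1 + b.1 - i) ((⟨1, hp.one_lt⟩ : Fin p).1 - i) : K) *
            (Nat.choose b.1 (b.1 - i) : K) * bas p (⟨1, hp.one_lt⟩ : Fin p) (⟨1, hp.one_lt⟩ : Fin p)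
            * Xel p a b
        else 0)
      = (if b.1 + 1 = m.1 then ((b.1 + 1 : ℕ) : K) * Xel p a b else 0) +
        (if b.1 = m.1 then ((b.1 : ℕ) : K) * Xel p a b else 0) := by
    rintro ⟨bv, hbv⟩
    match bv with
    | 0 => simp [bas]
    | n + 1 =>
      have hmin : min 1 (n + 1) = 1 := by omega
      rw [hmin]
      rw [Finset.sum_range_succ, Finset.sum_range_one]
      simp only [bas, if_pos rfl, mul_one]
      have h1 : 1 + (n + 1) - 0 = n + 2 := by omega
      have h2 : 1 + (n + 1) - 1 = n + 1 := by omega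
      rw [h1, h2]
      simp [Nat.choose_succ_self_right, Nat.choose_one_right, Nat.choose_self]
      ring_nf
  rw [Finset.sum_congr rfl (fun b _ => hb b), Finset.sum_add_distrib]
  have hsum2 : (∑ b : Fin p, if b.1 = m.1 then ((b.1 : ℕ) : K) * Xel p a b else 0)
      = (m.1 : K) * Xel p a m := by
    rw [Fintype.sum_eq_single m (by rintro x hx; rw [if_neg (fun h => hx (Fin.ext h))])]
    rw [if_pos rfl]
  rw [hsum2]
  obtain ⟨mv, hmv⟩ := m
  match mv with
  | 0 =>
    simp only [Fin.ite_val]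
    rw [Fintype.sum_eq_zero _ (by intro b; simp)]
    simp only [Nat.cast_zero, zero_mul, zero_add, add_zero]
    rcases Nat.eq_zero_or_pos a.1 with h | h
    · simp [h]
    · rw [Xel, if_neg (by simp [Fin.le_def]; omega)]
      ring
  | n + 1 =>
    have hn : n < p := by omega
    have hsum1 : (∑ b : Fin p, if b.1 + 1 = (⟨n + 1, hmv⟩ : Fin p).1 then
        ((b.1 + 1 : ℕ) : K) * Xel p a b else 0)
        = ((n + 1 : ℕ) : K) * Xel p a ⟨n, hn⟩ := by
      rw [Fintype.sum_eq_single (⟨n, hn⟩ : Fin p)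
        (by rintro x hx; rw [if_neg (fun h => hx (Fin.ext (by simpa using Nat.succ_injective h)))])]
      rw [if_pos rfl]
    rw [hsum1]
    simp only [Xel, Fin.le_def]
    by_cases h1 : a.1 ≤ n
    · rw [if_pos h1, if_pos (by simpa using Nat.le_succ_of_le h1)]
      have he : n + 1 - a.1 = (n - a.1) + 1 := by omega
      rw [he, pow_succ]
      have hle : a.1 ≤ n + 1 := by omega
      have hK : (Nat.choose n a.1 : K) * ((n : K) + 1)
          = (Nat.choose (n + 1) a.1 : K) * (((n : K) + 1) - (a.1 : K)) := by
        have := congrArg (Nat.cast : ℕ → K) (Nat.choose_mul_succ_eq n a.1)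
        push_cast [Nat.cast_sub hle] at this
        linear_combination this
      push_cast
      linear_combination ((-1 : K) ^ (n - a.1)) * hK
    · rw [if_neg (by simpa using h1)]
      by_cases h2 : a.1 ≤ n + 1
      · have ha : a.1 = n + 1 := by omega
        rw [if_pos (by simpa using h2)]
        simp [ha]
      · rw [if_neg (by simpa using h2)]
        ring


/-- `Y_b` in the variable `y` is given by the same formula as `X_a`. -/
theorem stmt_17 {p : ℕ} (hp : p.Prime) {K : Type*} [Field K] [CharP K p] (a b : Fin p) :
    (fun mn : Fin p × Fin p =>
        dmul p (bas p (K := K) ⟨1, hp.one_lt⟩) (Xel p a) mn.1 * Xel p b mn.2 +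
          Xel p a mn.1 * dmul p (bas p (K := K) ⟨1, hp.one_lt⟩) (Xel p b) mn.2) =
      fun mn : Fin p × Fin p =>
        ((a.1 + b.1 : ℕ) : K) * (Xel p a mn.1 * Xel p b mn.2) := by
  funext mn
  rw [key hp a mn.1, key hp b mn.2]
  push_cast
  ring
end

section
/- Let p be prime, q = p^r, and let C be the q² × q² matrix over F_p indexed by pairs (i,j), 0 ≤ i,j < q, with entries c_{(i,j),(i,j)} = i + j, c_{(i+1,j),(i,j)} = i + 1, c_{(i,j+1),(i,j)} = j + 1 (all mod p), and zeros elsewhere. Then the rank of C is q² - q²/p. -/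
/-!
Multiplication by `x + y` is the Kronecker sum `A ⊗ 1 + 1 ⊗ A`, where `A` is multiplication by
`x` in the basis `binom(x, i)`. In characteristic `p`, `A` is diagonalised by a unitriangular
matrix whose `a`-th column, supported on the block of indices `i` with `i / p = a / p`, has entries
`(-1)^i binom(i % p, a % p)` and eigenvalue `a`. Hence `C` is similar to `diag(i + j)`, and its
rank is the number of pairs with `p ∤ i + j`; as every residue class mod `p` has `q / p`
representatives below `q`, this is `q² - q²/p`.
-/

open Finset

/-- The matrix of multiplication by `x + y` on `Dist(T_1)` in the basis
`binom(x,i)binom(y,j)`, `0 ≤ i,j < q`. -/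
def multMatrix (p r : ℕ) : Matrix (Fin (p ^ r) × Fin (p ^ r)) (Fin (p ^ r) × Fin (p ^ r)) (ZMod p) :=
  fun row col =>
    if row = col then ((row.1.1 : ℕ) + (row.2.1 : ℕ) : ZMod p)
    else if (row.1.1 : ℕ) = (col.1.1 : ℕ) + 1 ∧ row.2 = col.2 then ((col.1.1 : ℕ) + 1 : ZMod p)
    else if (row.2.1 : ℕ) = (col.2.1 : ℕ) + 1 ∧ row.1 = col.1 then ((col.2.1 : ℕ) + 1 : ZMod p)
    else 0

theorem Nat.succ_mul_choose_eq_mul_choose_add (m s : ℕ) :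
    (m + 1) * (m + 1).choose s = s * (m + 1).choose s + (m + 1) * m.choose s := by
  cases s with
  | zero => simp
  | succ t =>
    rw [Nat.choose_succ_succ' m t, Nat.mul_add, Nat.add_one_mul_choose_eq, ← Nat.choose_succ_succ']
    ring

section Eigen

variable (R : Type*) [CommRing R] (p : ℕ)

/-- Column `k` records `x * binom(x, k) = k * binom(x, k) + (k + 1) * binom(x, k + 1)`. -/
def mulXMatrix (q : ℕ) : Matrix (Fin q) (Fin q) R :=
  fun i k => if (i : ℕ) = k then (k : R) else if (i : ℕ) = k + 1 then (k : R) + 1 else 0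

def eigenvectorCoeff (a i : ℕ) : R :=
  if i / p = a / p then (-1) ^ i * ((i % p).choose (a % p) : R) else 0

def eigenvectorMatrix (q : ℕ) : Matrix (Fin q) (Fin q) R :=
  fun i a => eigenvectorCoeff R p a i

variable {R}

/-- At `i = 0` the truncated `i - 1` is harmless, as it is multiplied by `0`. -/
theorem sum_mulXMatrix_mul {q : ℕ} (i : Fin q) (v : ℕ → R) :
    ∑ k : Fin q, mulXMatrix R q i k * v k = i * (v i + v (i - 1)) := by
  obtain ⟨i, hi⟩ := i
  have hsplit : ∀ k : ℕ, (if i = k then (k : R) else if i = k + 1 then (k : R) + 1 else 0) * v k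
      = (if k = i then (i : R) * v i else 0) + (if k + 1 = i then (i : R) * v (i - 1) else 0) := by
    intro k
    split_ifs <;> subst_vars <;> first | omega | simp
  simp only [mulXMatrix]
  rw [Fin.sum_univ_eq_sum_range (fun k => (if i = k then (k : R) else
    if i = k + 1 then (k : R) + 1 else 0) * v k), sum_congr rfl fun k _ => hsplit k,
    sum_add_distrib, sum_ite_eq', if_pos (mem_range.2 hi), mul_add]
  rcases i with _ | j
  · simp
  · simp [show j < q by omega]

theorem eigenvectorMatrix_isLowerTriangular (q : ℕ) :
    (eigenvectorMatrix R p q).IsLowerTriangular := by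
  intro i a (hia : (i : ℕ) < a)
  simp only [eigenvectorMatrix, eigenvectorCoeff]
  split_ifs with hb
  · have hi := Nat.div_add_mod i p
    have ha := Nat.div_add_mod a p
    rw [hb] at hi
    rw [Nat.choose_eq_zero_of_lt (by omega), Nat.cast_zero, mul_zero]
  · rfl

theorem isUnit_det_eigenvectorMatrix (q : ℕ) : IsUnit (eigenvectorMatrix R p q).det := by
  rw [Matrix.det_of_isLowerTriangular _ (eigenvectorMatrix_isLowerTriangular p q)]
  refine IsUnit.prod_iff.mpr fun a _ => ?_
  simpa [eigenvectorMatrix, eigenvectorCoeff] using (isUnit_one.neg).pow (a : ℕ)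

variable [CharP R p]

theorem natCast_mul_eigenvectorCoeff_of_mod_eq_zero {i : ℕ} (hi : i % p = 0) (a : ℕ) :
    (a : R) * eigenvectorCoeff R p a i = 0 := by
  rw [CharP.cast_eq_mod R p a, eigenvectorCoeff, hi]
  rcases (a % p).eq_zero_or_pos with ha | ha
  · simp [ha]
  · simp [Nat.choose_eq_zero_of_lt ha]

theorem eigenvectorCoeff_eigen (a i : ℕ) :
    (i : R) * (eigenvectorCoeff R p a i + eigenvectorCoeff R p a (i - 1))
      = a * eigenvectorCoeff R p a i := by
  rcases i with _ | j
  · simpa using (natCast_mul_eigenvectorCoeff_of_mod_eq_zero p (Nat.zero_mod p) a).symm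
  by_cases hj : p ∣ j + 1
  · rw [(CharP.cast_eq_zero_iff R p _).2 hj, zero_mul,
      natCast_mul_eigenvectorCoeff_of_mod_eq_zero p (Nat.mod_eq_zero_of_dvd hj)]
  have hdiv : (j + 1) / p = j / p := Nat.succ_div_of_not_dvd hj
  have hmod : (j + 1) % p = j % p + 1 := by
    have h1 := Nat.div_add_mod (j + 1) p
    have h2 := Nat.div_add_mod j p
    rw [hdiv] at h1
    omega
  simp only [eigenvectorCoeff, hdiv, hmod, Nat.add_sub_cancel]
  -- inside a block, with `m = j % p` and `s = a % p`: `(m + 1) (C(m+1, s) - C(m, s)) = s C(m+1, s)`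
  split_ifs
  · rw [CharP.cast_eq_mod R p (j + 1), CharP.cast_eq_mod R p a, hmod]
    have key := congrArg (Nat.cast : ℕ → R)
      (Nat.succ_mul_choose_eq_mul_choose_add (j % p) (a % p))
    push_cast at key ⊢
    linear_combination (-1 : R) ^ (j + 1) * key
  · simp

theorem mulXMatrix_mul_eigenvectorMatrix (q : ℕ) :
    mulXMatrix R q * eigenvectorMatrix R p q
      = eigenvectorMatrix R p q * Matrix.diagonal (fun a : Fin q => (a : R)) := by
  ext i a
  rw [Matrix.mul_apply, Matrix.mul_diagonal, mul_comm _ (a : R)]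
  exact (sum_mulXMatrix_mul i (fun k => eigenvectorCoeff R p a k)).trans
    (eigenvectorCoeff_eigen p a i)

end Eigen

section Kronecker

open Kronecker Matrix

variable {R n : Type*} [CommRing R] [Fintype n] [DecidableEq n]

theorem kroneckerSum_mul_kronecker {A P : Matrix n n R} {d : n → R}
    (h : A * P = P * diagonal d) :
    (A ⊗ₖ 1 + 1 ⊗ₖ A) * (P ⊗ₖ P) = (P ⊗ₖ P) * diagonal fun x => d x.1 + d x.2 := by
  have hl : (A ⊗ₖ 1) * (P ⊗ₖ P) = (P ⊗ₖ P) * (diagonal d ⊗ₖ 1) := by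
    rw [← mul_kronecker_mul, ← mul_kronecker_mul, h, one_mul, mul_one]
  have hr : (1 ⊗ₖ A) * (P ⊗ₖ P) = (P ⊗ₖ P) * (1 ⊗ₖ diagonal d) := by
    rw [← mul_kronecker_mul, ← mul_kronecker_mul, h, one_mul, mul_one]
  rw [add_mul, hl, hr, ← mul_add, ← diagonal_one, diagonal_kronecker_diagonal,
    diagonal_kronecker_diagonal, diagonal_add]
  simp

end Kronecker

open Kronecker in
theorem multMatrix_eq_kroneckerSum (p r : ℕ) :
    multMatrix p r = mulXMatrix (ZMod p) (p ^ r) ⊗ₖ 1 + 1 ⊗ₖ mulXMatrix (ZMod p) (p ^ r) := by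
  ext ⟨i, j⟩ ⟨k, l⟩
  simp only [multMatrix, mulXMatrix, Matrix.add_apply, Matrix.kroneckerMap_apply,
    Matrix.one_apply, Prod.mk.injEq, Fin.ext_iff]
  split_ifs <;> simp_all

theorem card_filter_natCast_eq {p q : ℕ} [NeZero p] (hpq : p ∣ q) (c : ZMod p) :
    #{j : Fin q | (j : ZMod p) = c} = q / p := by
  have hc : ∀ j : ℕ, (j : ZMod p) = c ↔ j ≡ c.val [MOD p] := fun j => by
    rw [← ZMod.natCast_eq_natCast_iff, ZMod.natCast_zmod_val]
  simp only [hc, card_filter]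
  rw [Fin.sum_univ_eq_sum_range (fun j => if j ≡ c.val [MOD p] then 1 else 0), ← card_filter,
    ← Nat.count_eq_card_filter_range, Nat.count_modEq_card _ (NeZero.pos p),
    Nat.mod_eq_zero_of_dvd hpq]
  simp

theorem card_filter_natCast_add_eq_zero {p q : ℕ} [NeZero p] (hpq : p ∣ q) :
    #{x : Fin q × Fin q | ((x.1 : ℕ) : ZMod p) + ((x.2 : ℕ) : ZMod p) = 0} = q * (q / p) := by
  have hrow : ∀ i : Fin q, #{j : Fin q | ((i : ℕ) : ZMod p) + ((j : ℕ) : ZMod p) = 0} = q / p :=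
    fun i => by simpa only [add_eq_zero_iff_eq_neg'] using card_filter_natCast_eq hpq _
  simp only [card_filter, Fintype.sum_prod_type] at hrow ⊢
  simp [hrow]

theorem Matrix.rank_eq_card_of_mul_eq_mul_diagonal {K n : Type*} [Field K] [Fintype n]
    [DecidableEq n] [DecidableEq K] {M P : Matrix n n K} {d : n → K} (hP : IsUnit P.det)
    (h : M * P = P * Matrix.diagonal d) :
    M.rank = Fintype.card {i // d i ≠ 0} := by
  rw [← Matrix.rank_mul_eq_left_of_isUnit_det P M hP, h,
    Matrix.rank_mul_eq_right_of_isUnit_det P _ hP, Matrix.rank_diagonal]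

open Kronecker in
theorem stmt_18 (p r : ℕ) (hp : p.Prime) (hr : 1 ≤ r) :
    (multMatrix p r).rank = p ^ r * p ^ r - (p ^ r * p ^ r) / p := by
  have : Fact p.Prime := ⟨hp⟩
  set q := p ^ r
  have hpq : p ∣ q := dvd_pow_self p (by omega)
  have hP : IsUnit (eigenvectorMatrix (ZMod p) p q ⊗ₖ eigenvectorMatrix (ZMod p) p q).det := by
    rw [Matrix.det_kronecker]
    exact ((isUnit_det_eigenvectorMatrix p q).pow _).mul ((isUnit_det_eigenvectorMatrix p q).pow _)
  have hconj := kroneckerSum_mul_kronecker (mulXMatrix_mul_eigenvectorMatrix (R := ZMod p) p q)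
  rw [← multMatrix_eq_kroneckerSum] at hconj
  rw [Matrix.rank_eq_card_of_mul_eq_mul_diagonal hP hconj, Fintype.card_subtype_compl,
    Fintype.card_subtype, card_filter_natCast_add_eq_zero hpq, Fintype.card_prod, Fintype.card_fin,
    Nat.mul_div_assoc q hpq]
end
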